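/- arXiv:2005.02889 — 2 statements merged into one kernel-verified Lean document; each statement's English description precedes it below -/
import Mathlib

section
/- There exist ε0 > 0 and C > 0, depending only on the model constants, such that for every 0 < ε ≤ ε0 and every nonnegative integrable hazard λ on [0,1] with h²(p_λ, p_{λ0}) ≤ ε², one has both H²(λ/∫_0^1 λ, λ0/∫_0^1 λ0) ≤ C·ε² and (∫_0^1 |λ(u) − λ0(u)|du)² ≤ C·ε². -/
/-!
The last term of `hellingerSq` forces `S(1) ≥ S₀(1)/4 ≥ exp(-c₂)/4` once `ε` is small, so `S` is
bounded below on `[0,1]`. The identity `√S (√λ - √λ₀) = (√(λS) - √(λ₀S₀)) - √λ₀ (√S - √S₀)` then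
bounds `H²(λ, λ₀)` by the second Hellinger term plus `∫ (√S - √S₀)²`, which the first term controls
because `g ≥ c₃`; hence `H²(λ, λ₀) = O(ε²)`. Writing `|λ - λ₀| = |√λ - √λ₀| (√λ + √λ₀)` and using
AM-GM with weight `ε` gives `∫ |λ - λ₀| = O(ε)`, so `∫ λ ≥ c₁/2`, and normalising by the integrals
costs only another `O(ε²)`.
-/

open MeasureTheory Real Set

noncomputable section

/-- Cumulative hazard `Λ(t) = ∫_0^t λ(u) du`. -/
def cumHaz (lam : ℝ → ℝ) (t : ℝ) : ℝ := ∫ u in (0:ℝ)..t, lam u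

/-- Survival function `S(t) = exp(−Λ(t))`. -/
def survF (lam : ℝ → ℝ) (t : ℝ) : ℝ := Real.exp (-(cumHaz lam t))

/-- `Ḡ(u) = 1 - ∫_0^u g(v) dv`. -/
def Gbar (g : ℝ → ℝ) (u : ℝ) : ℝ := 1 - ∫ v in (0:ℝ)..u, g v

/-- Squared Hellinger distance between the censored-data densities associated with the
hazards `lam` and `lam0`, for censoring density `g`. -/
def hellingerSq (g lam0 lam : ℝ → ℝ) : ℝ :=
  (∫ y in (0:ℝ)..1, (Real.sqrt (g y * survF lam y) - Real.sqrt (g y * survF lam0 y)) ^ 2)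
    + (∫ y in (0:ℝ)..1,
        Gbar g y * (Real.sqrt (lam y * survF lam y) - Real.sqrt (lam0 y * survF lam0 y)) ^ 2)
    + Gbar g 1 * (Real.sqrt (survF lam 1) - Real.sqrt (survF lam0 1)) ^ 2


/-- Pseudo-Hellinger squared distance between two nonnegative functions on `[0,1]`:
`H²(λ1,λ2) = ∫_0^1 (√λ1 − √λ2)²`. -/
def HSq (l1 l2 : ℝ → ℝ) : ℝ := ∫ u in (0:ℝ)..1, (Real.sqrt (l1 u) - Real.sqrt (l2 u)) ^ 2

lemma sq_sqrt_sub_sqrt_le_abs_add_abs (x y : ℝ) : (√x - √y) ^ 2 ≤ |x| + |y| := by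
  have hx : √x ^ 2 ≤ |x| := by
    rw [← sq_sqrt (abs_nonneg x)]; gcongr; exact le_abs_self x
  have hy : √y ^ 2 ≤ |y| := by
    rw [← sq_sqrt (abs_nonneg y)]; gcongr; exact le_abs_self y
  nlinarith [mul_nonneg (sqrt_nonneg x) (sqrt_nonneg y)]

lemma mul_sq_sqrt_sub_sqrt_le {L L0 S S0 : ℝ} (hL : 0 ≤ L) (hL0 : 0 ≤ L0) (hS : 0 ≤ S) :
    S * (√L - √L0) ^ 2 ≤ 2 * (√(L * S) - √(L0 * S0)) ^ 2 + 2 * L0 * (√S - √S0) ^ 2 := by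
  calc S * (√L - √L0) ^ 2
      = ((√L * √S - √L0 * √S0) + (-√L0 * (√S - √S0))) ^ 2 := by
        linear_combination (-(√L - √L0) ^ 2) * sq_sqrt hS
    _ ≤ 2 * ((√L * √S - √L0 * √S0) ^ 2 + (-√L0 * (√S - √S0)) ^ 2) := add_sq_le
    _ = _ := by
        rw [sqrt_mul hL, sqrt_mul hL0]
        linear_combination 2 * (√S - √S0) ^ 2 * sq_sqrt hL0

lemma le_two_mul_sq_sqrt_sub_sqrt_add {x y : ℝ} (hx : 0 ≤ x) (hy : 0 ≤ y) :
    x ≤ 2 * (√x - √y) ^ 2 + 2 * y := by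
  nlinarith [sq_sqrt hx, sq_sqrt hy, sq_nonneg (√x - 2 * √y)]

lemma abs_sub_le_sq_sqrt_sub_sqrt {x y t : ℝ} (hx : 0 ≤ x) (hy : 0 ≤ y) (ht : 0 < t) :
    |x - y| ≤ (√x - √y) ^ 2 / (2 * t) + t * (x + y) := by
  have hxy : |x - y| = |√x - √y| * (√x + √y) := by
    rw [← abs_of_nonneg (by positivity : 0 ≤ √x + √y), ← abs_mul]
    congr 1
    nlinarith [sq_sqrt hx, sq_sqrt hy]
  -- AM-GM with weight `t`
  have hamgm : |√x - √y| * (√x + √y) ≤ (√x - √y) ^ 2 / (2 * t) + t / 2 * (√x + √y) ^ 2 := by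
    rw [div_add' _ _ _ (by positivity), le_div_iff₀ (by positivity)]
    nlinarith [sq_nonneg (|√x - √y| - t * (√x + √y)), sq_abs (√x - √y)]
  have hsum : (√x + √y) ^ 2 ≤ 2 * (x + y) := by
    simpa only [sq_sqrt hx, sq_sqrt hy] using add_sq_le (a := √x) (b := √y)
  nlinarith

lemma quarter_le_of_mul_sq_sqrt_sub_sqrt_le {G s s0 δ : ℝ} (hG : 0 < G) (hs : 0 ≤ s)
    (h : G * (√s - √s0) ^ 2 ≤ δ) (hδ : 4 * δ ≤ G * s0) : s0 / 4 ≤ s := by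
  have hs0 : 0 ≤ s0 := by nlinarith [sq_nonneg (√s - √s0)]
  have hclose : (√s - √s0) ^ 2 ≤ (√s0 / 2) ^ 2 := by
    rw [div_pow, sq_sqrt hs0]; nlinarith
  have : √s0 / 2 ≤ √s := by linarith [(abs_le.1 (abs_le_of_sq_le_sq hclose (by positivity))).1]
  nlinarith [sq_sqrt hs, sq_sqrt hs0, sqrt_nonneg s0]

lemma sq_inv_sqrt_sub_inv_sqrt_le {A A0 : ℝ} (hA : 0 < A) (hA0 : 0 < A0) :
    (1 / √A - 1 / √A0) ^ 2 ≤ (A - A0) ^ 2 / (A * A0 ^ 2) := by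
  obtain ⟨a, ha, rfl⟩ : ∃ a, 0 < a ∧ a ^ 2 = A := ⟨√A, sqrt_pos.2 hA, sq_sqrt hA.le⟩
  obtain ⟨b, hb, rfl⟩ : ∃ b, 0 < b ∧ b ^ 2 = A0 := ⟨√A0, sqrt_pos.2 hA0, sq_sqrt hA0.le⟩
  rw [sqrt_sq ha.le, sqrt_sq hb.le, div_sub_div _ _ ha.ne' hb.ne', div_pow,
    div_le_div_iff₀ (by positivity) (by positivity)]
  -- after clearing denominators this is `b² ≤ (a + b)²`, times `(a - b)² a² b²`
  have hb2 : b ^ 2 ≤ (a + b) ^ 2 := by nlinarith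
  nlinarith [mul_le_mul_of_nonneg_left hb2 (by positivity : 0 ≤ (a - b) ^ 2 * a ^ 2 * b ^ 2)]

lemma sq_sqrt_div_sub_sqrt_div_le {L L0 A A0 : ℝ} (hL : 0 ≤ L) (hL0 : 0 ≤ L0) (hA : 0 < A)
    (hA0 : 0 < A0) :
    (√(L / A) - √(L0 / A0)) ^ 2 ≤
      2 / A * (√L - √L0) ^ 2 + 2 * (A - A0) ^ 2 / (A * A0 ^ 2) * L0 := by
  have hsA : √A ≠ 0 := (sqrt_pos.2 hA).ne'
  have hsA0 : √A0 ≠ 0 := (sqrt_pos.2 hA0).ne'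
  calc (√(L / A) - √(L0 / A0)) ^ 2
      = ((√L - √L0) / √A + √L0 * (1 / √A - 1 / √A0)) ^ 2 := by
        rw [sqrt_div hL, sqrt_div hL0]; field_simp; ring
    _ ≤ 2 * (((√L - √L0) / √A) ^ 2 + (√L0 * (1 / √A - 1 / √A0)) ^ 2) := add_sq_le
    _ = 2 / A * (√L - √L0) ^ 2 + 2 * L0 * (1 / √A - 1 / √A0) ^ 2 := by
        rw [div_pow, mul_pow, sq_sqrt hA.le, sq_sqrt hL0]; ring
    _ ≤ 2 / A * (√L - √L0) ^ 2 + 2 * L0 * ((A - A0) ^ 2 / (A * A0 ^ 2)) := by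
        gcongr; exact sq_inv_sqrt_sub_inv_sqrt_le hA hA0
    _ = _ := by ring

lemma ae_restrict_Ioc_of_forall_Ioo {a b : ℝ} {p : ℝ → Prop} (h : ∀ x ∈ Ioo a b, p x) :
    ∀ᵐ x ∂volume.restrict (Ioc a b), p x :=
  (ae_restrict_congr_set Ioo_ae_eq_Ioc).1 (ae_restrict_of_forall_mem measurableSet_Ioo h)

lemma intervalIntegrable_of_abs_le {f : ℝ → ℝ} {a b M : ℝ} (hab : a ≤ b)
    (hf : AEStronglyMeasurable f (volume.restrict (Ioc a b))) (h : ∀ x ∈ Ioo a b, |f x| ≤ M) :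
    IntervalIntegrable f volume a b := by
  rw [← uIoc_of_le hab] at hf
  refine (intervalIntegrable_const (c := M)).mono_fun' hf ?_
  rw [uIoc_of_le hab]
  exact ae_restrict_Ioc_of_forall_Ioo h

lemma IntervalIntegrable.sq_sqrt_sub_sqrt {μ : Measure ℝ} {u v : ℝ → ℝ} {a b : ℝ}
    (hu : IntervalIntegrable u μ a b) (hv : IntervalIntegrable v μ a b) :
    IntervalIntegrable (fun x => (√(u x) - √(v x)) ^ 2) μ a b := by
  refine (hu.abs.add hv.abs).mono_fun' ?_ (Filter.Eventually.of_forall fun x => ?_)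
  · exact ((continuous_sqrt.comp_aestronglyMeasurable hu.def'.aestronglyMeasurable).sub
      (continuous_sqrt.comp_aestronglyMeasurable hv.def'.aestronglyMeasurable)).pow 2
  · simpa only [norm_pow, norm_eq_abs, sq_abs] using
      sq_sqrt_sub_sqrt_le_abs_add_abs (u x) (v x)

section HSq

lemma HSq_nonneg (l1 l2 : ℝ → ℝ) : 0 ≤ HSq l1 l2 :=
  intervalIntegral.integral_nonneg zero_le_one fun _ _ => sq_nonneg _

variable {lam lam0 : ℝ → ℝ}

lemma integral_le_two_mul_HSq_add (hlam : ∀ u ∈ Icc (0:ℝ) 1, 0 ≤ lam u)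
    (hlam0 : ∀ u ∈ Icc (0:ℝ) 1, 0 ≤ lam0 u) (hi : IntervalIntegrable lam volume 0 1)
    (hi0 : IntervalIntegrable lam0 volume 0 1) :
    ∫ u in (0:ℝ)..1, lam u ≤ 2 * HSq lam lam0 + 2 * ∫ u in (0:ℝ)..1, lam0 u := by
  have hH := hi.sq_sqrt_sub_sqrt hi0
  calc ∫ u in (0:ℝ)..1, lam u
      ≤ ∫ u in (0:ℝ)..1, (2 * (√(lam u) - √(lam0 u)) ^ 2 + 2 * lam0 u) :=
        intervalIntegral.integral_mono_on zero_le_one hi ((hH.const_mul 2).add (hi0.const_mul 2))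
          fun u hu => le_two_mul_sq_sqrt_sub_sqrt_add (hlam u hu) (hlam0 u hu)
    _ = _ := by
        rw [intervalIntegral.integral_add (hH.const_mul 2) (hi0.const_mul 2),
          intervalIntegral.integral_const_mul, intervalIntegral.integral_const_mul, HSq]

lemma integral_abs_sub_le_HSq {t : ℝ} (ht : 0 < t) (hlam : ∀ u ∈ Icc (0:ℝ) 1, 0 ≤ lam u)
    (hlam0 : ∀ u ∈ Icc (0:ℝ) 1, 0 ≤ lam0 u) (hi : IntervalIntegrable lam volume 0 1)
    (hi0 : IntervalIntegrable lam0 volume 0 1) :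
    ∫ u in (0:ℝ)..1, |lam u - lam0 u| ≤
      HSq lam lam0 / (2 * t) + t * ((∫ u in (0:ℝ)..1, lam u) + ∫ u in (0:ℝ)..1, lam0 u) := by
  have hH := hi.sq_sqrt_sub_sqrt hi0
  calc ∫ u in (0:ℝ)..1, |lam u - lam0 u|
      ≤ ∫ u in (0:ℝ)..1, ((√(lam u) - √(lam0 u)) ^ 2 / (2 * t) + t * (lam u + lam0 u)) :=
        intervalIntegral.integral_mono_on zero_le_one (hi.sub hi0).abs
          ((hH.div_const _).add ((hi.add hi0).const_mul t))
          fun u hu => abs_sub_le_sq_sqrt_sub_sqrt (hlam u hu) (hlam0 u hu) ht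
    _ = _ := by
        rw [intervalIntegral.integral_add (hH.div_const _) ((hi.add hi0).const_mul t),
          intervalIntegral.integral_div, intervalIntegral.integral_const_mul,
          intervalIntegral.integral_add hi hi0, HSq]

lemma HSq_div_integral_le {A : ℝ} (hA : 0 < A) (hA0 : 0 < ∫ u in (0:ℝ)..1, lam0 u)
    (hlam : ∀ u ∈ Icc (0:ℝ) 1, 0 ≤ lam u) (hlam0 : ∀ u ∈ Icc (0:ℝ) 1, 0 ≤ lam0 u)
    (hi : IntervalIntegrable lam volume 0 1) (hi0 : IntervalIntegrable lam0 volume 0 1) :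
    HSq (fun u => lam u / A) (fun u => lam0 u / ∫ x in (0:ℝ)..1, lam0 x) ≤
      2 / A * HSq lam lam0 +
        2 * (A - ∫ u in (0:ℝ)..1, lam0 u) ^ 2 / (A * ∫ u in (0:ℝ)..1, lam0 u) := by
  set A0 := ∫ u in (0:ℝ)..1, lam0 u
  have hH := hi.sq_sqrt_sub_sqrt hi0
  have hbound := (hH.const_mul (2 / A)).add (hi0.const_mul (2 * (A - A0) ^ 2 / (A * A0 ^ 2)))
  calc HSq (fun u => lam u / A) (fun u => lam0 u / A0)
      ≤ ∫ u in (0:ℝ)..1,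
          (2 / A * (√(lam u) - √(lam0 u)) ^ 2 + 2 * (A - A0) ^ 2 / (A * A0 ^ 2) * lam0 u) :=
        intervalIntegral.integral_mono_on zero_le_one
          ((hi.div_const A).sq_sqrt_sub_sqrt (hi0.div_const A0)) hbound
          fun u hu => sq_sqrt_div_sub_sqrt_div_le (hlam u hu) (hlam0 u hu) hA hA0
    _ = 2 / A * HSq lam lam0 + 2 * (A - A0) ^ 2 / (A * A0 ^ 2) * A0 := by
        rw [intervalIntegral.integral_add (hH.const_mul _) (hi0.const_mul _),
          intervalIntegral.integral_const_mul, intervalIntegral.integral_const_mul, HSq]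
    _ = _ := by field_simp

end HSq

lemma integral_zero_one_le_of_le {f : ℝ → ℝ} {c : ℝ} (hi : IntervalIntegrable f volume 0 1)
    (h : ∀ u ∈ Icc (0:ℝ) 1, f u ≤ c) : ∫ u in (0:ℝ)..1, f u ≤ c := by
  simpa using intervalIntegral.integral_mono_on zero_le_one hi intervalIntegrable_const h

lemma le_integral_zero_one_of_le {f : ℝ → ℝ} {c : ℝ} (hi : IntervalIntegrable f volume 0 1)
    (h : ∀ u ∈ Icc (0:ℝ) 1, c ≤ f u) : c ≤ ∫ u in (0:ℝ)..1, f u := by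
  simpa using intervalIntegral.integral_mono_on zero_le_one intervalIntegrable_const hi h

section Hellinger

variable {g lam lam0 : ℝ → ℝ}

lemma continuousOn_survF (hi : IntervalIntegrable lam volume 0 1) :
    ContinuousOn (survF lam) (uIcc 0 1) :=
  continuous_exp.comp_continuousOn
    (intervalIntegral.continuousOn_primitive_interval' hi left_mem_uIcc).neg

lemma continuousOn_Gbar (hgi : IntervalIntegrable g volume 0 1) :
    ContinuousOn (Gbar g) (uIcc 0 1) :=
  continuousOn_const.sub
    (intervalIntegral.continuousOn_primitive_interval' hgi left_mem_uIcc)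

lemma survF_one_le_survF (hlam : ∀ u ∈ Icc (0:ℝ) 1, 0 ≤ lam u)
    (hi : IntervalIntegrable lam volume 0 1) {y : ℝ} (hy : y ∈ Icc (0:ℝ) 1) :
    survF lam 1 ≤ survF lam y :=
  exp_le_exp.2 <| neg_le_neg <| intervalIntegral.integral_mono_interval le_rfl hy.1 hy.2
    (ae_restrict_Ioc_of_forall_Ioo fun u hu => hlam u (Ioo_subset_Icc_self hu)) hi

lemma Gbar_one_le_Gbar (hg : ∀ t ∈ Ioo (0:ℝ) 1, 0 ≤ g t) (hgi : IntervalIntegrable g volume 0 1)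
    {y : ℝ} (hy : y ∈ Icc (0:ℝ) 1) : Gbar g 1 ≤ Gbar g y :=
  sub_le_sub_left (intervalIntegral.integral_mono_interval le_rfl hy.1 hy.2
    (ae_restrict_Ioc_of_forall_Ioo hg) hgi) 1

lemma mul_integral_sq_sqrt_survF_sub_le {c3 : ℝ} (hc3 : 0 ≤ c3)
    (hg : ∀ t ∈ Ioo (0:ℝ) 1, c3 ≤ g t) (hgi : IntervalIntegrable g volume 0 1)
    (hi : IntervalIntegrable lam volume 0 1) (hi0 : IntervalIntegrable lam0 volume 0 1) :
    c3 * ∫ y in (0:ℝ)..1, (√(survF lam y) - √(survF lam0 y)) ^ 2 ≤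
      ∫ y in (0:ℝ)..1, (√(g y * survF lam y) - √(g y * survF lam0 y)) ^ 2 := by
  have hS := continuousOn_survF hi
  have hS0 := continuousOn_survF hi0
  rw [← intervalIntegral.integral_const_mul]
  refine intervalIntegral.integral_mono_on_of_le_Ioo zero_le_one
    ((hS.intervalIntegrable.sq_sqrt_sub_sqrt hS0.intervalIntegrable).const_mul c3)
    ((hgi.mul_continuousOn hS).sq_sqrt_sub_sqrt (hgi.mul_continuousOn hS0)) fun y hy => ?_
  have hgy : 0 ≤ g y := hc3.trans (hg y hy)
  rw [sqrt_mul hgy, sqrt_mul hgy, ← mul_sub, mul_pow, sq_sqrt hgy]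
  exact mul_le_mul_of_nonneg_right (hg y hy) (sq_nonneg _)

lemma Gbar_one_mul_integral_le (hg : ∀ t ∈ Ioo (0:ℝ) 1, 0 ≤ g t)
    (hgi : IntervalIntegrable g volume 0 1) {f : ℝ → ℝ} (hf : IntervalIntegrable f volume 0 1)
    (hf0 : ∀ y ∈ Icc (0:ℝ) 1, 0 ≤ f y) :
    Gbar g 1 * ∫ y in (0:ℝ)..1, f y ≤ ∫ y in (0:ℝ)..1, Gbar g y * f y := by
  rw [← intervalIntegral.integral_const_mul]
  exact intervalIntegral.integral_mono_on zero_le_one (hf.const_mul _)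
    (hf.continuousOn_mul (continuousOn_Gbar hgi))
    fun y hy => mul_le_mul_of_nonneg_right (Gbar_one_le_Gbar hg hgi hy) (hf0 y hy)

lemma le_hellingerSq {c3 : ℝ} (hc3 : 0 ≤ c3) (hg : ∀ t ∈ Ioo (0:ℝ) 1, c3 ≤ g t)
    (hgi : IntervalIntegrable g volume 0 1) (hi : IntervalIntegrable lam volume 0 1)
    (hi0 : IntervalIntegrable lam0 volume 0 1) :
    c3 * (∫ y in (0:ℝ)..1, (√(survF lam y) - √(survF lam0 y)) ^ 2)
      + Gbar g 1 * (∫ y in (0:ℝ)..1, (√(lam y * survF lam y) - √(lam0 y * survF lam0 y)) ^ 2)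
      + Gbar g 1 * (√(survF lam 1) - √(survF lam0 1)) ^ 2 ≤ hellingerSq g lam0 lam := by
  have hf := (hi.mul_continuousOn (continuousOn_survF hi)).sq_sqrt_sub_sqrt
    (hi0.mul_continuousOn (continuousOn_survF hi0))
  rw [hellingerSq]
  gcongr ?_ + ?_ + _
  · exact mul_integral_sq_sqrt_survF_sub_le hc3 hg hgi hi hi0
  · exact Gbar_one_mul_integral_le (fun t ht => hc3.trans (hg t ht)) hgi hf
      fun _ _ => sq_nonneg _

lemma mul_HSq_le {r c : ℝ} (hr : ∀ y ∈ Icc (0:ℝ) 1, r ≤ survF lam y)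
    (hlam : ∀ u ∈ Icc (0:ℝ) 1, 0 ≤ lam u) (hi : IntervalIntegrable lam volume 0 1)
    (hlam0 : ∀ u ∈ Icc (0:ℝ) 1, 0 ≤ lam0 u ∧ lam0 u ≤ c)
    (hi0 : IntervalIntegrable lam0 volume 0 1) :
    r * HSq lam lam0 ≤
      2 * (∫ y in (0:ℝ)..1, (√(lam y * survF lam y) - √(lam0 y * survF lam0 y)) ^ 2)
        + 2 * c * ∫ y in (0:ℝ)..1, (√(survF lam y) - √(survF lam0 y)) ^ 2 := by
  have hS := continuousOn_survF hi
  have hS0 := continuousOn_survF hi0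
  have hf := (hi.mul_continuousOn hS).sq_sqrt_sub_sqrt (hi0.mul_continuousOn hS0)
  have hq := (hS.intervalIntegrable (μ := volume)).sq_sqrt_sub_sqrt hS0.intervalIntegrable
  rw [HSq, ← intervalIntegral.integral_const_mul]
  calc ∫ y in (0:ℝ)..1, r * (√(lam y) - √(lam0 y)) ^ 2
      ≤ ∫ y in (0:ℝ)..1, (2 * (√(lam y * survF lam y) - √(lam0 y * survF lam0 y)) ^ 2
          + 2 * c * (√(survF lam y) - √(survF lam0 y)) ^ 2) := by
        refine intervalIntegral.integral_mono_on zero_le_one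
          ((hi.sq_sqrt_sub_sqrt hi0).const_mul r) ((hf.const_mul 2).add (hq.const_mul _))
          fun y hy => ?_
        calc r * (√(lam y) - √(lam0 y)) ^ 2 ≤ survF lam y * (√(lam y) - √(lam0 y)) ^ 2 :=
              mul_le_mul_of_nonneg_right (hr y hy) (sq_nonneg _)
          _ ≤ 2 * (√(lam y * survF lam y) - √(lam0 y * survF lam0 y)) ^ 2
                + 2 * lam0 y * (√(survF lam y) - √(survF lam0 y)) ^ 2 :=
              mul_sq_sqrt_sub_sqrt_le (hlam y hy) (hlam0 y hy).1 (exp_pos _).le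
          _ ≤ _ := by gcongr; exact (hlam0 y hy).2
    _ = _ := by
        rw [intervalIntegral.integral_add (hf.const_mul 2) (hq.const_mul _),
          intervalIntegral.integral_const_mul, intervalIntegral.integral_const_mul]

lemma HSq_le_of_hellingerSq_le {c2 c3 δ : ℝ} (hc3 : 0 < c3)
    (hG : 0 < Gbar g 1) (hg : ∀ t ∈ Ioo (0:ℝ) 1, c3 ≤ g t)
    (hgi : IntervalIntegrable g volume 0 1) (hlam0 : ∀ u ∈ Icc (0:ℝ) 1, 0 ≤ lam0 u ∧ lam0 u ≤ c2)
    (hi0 : IntervalIntegrable lam0 volume 0 1) (hlam : ∀ u ∈ Icc (0:ℝ) 1, 0 ≤ lam u)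
    (hi : IntervalIntegrable lam volume 0 1) (hδ : 4 * δ ≤ Gbar g 1 * exp (-c2))
    (hH : hellingerSq g lam0 lam ≤ δ) :
    HSq lam lam0 ≤ 8 * exp c2 * (1 / Gbar g 1 + c2 / c3) * δ := by
  have hterms := le_hellingerSq hc3.le hg hgi hi hi0
  set I1 := ∫ y in (0:ℝ)..1, (√(survF lam y) - √(survF lam0 y)) ^ 2
  set I2 := ∫ y in (0:ℝ)..1, (√(lam y * survF lam y) - √(lam0 y * survF lam0 y)) ^ 2
  have hc3I1 : 0 ≤ c3 * I1 :=
    mul_nonneg hc3.le (intervalIntegral.integral_nonneg zero_le_one fun _ _ => sq_nonneg _)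
  have hGI2 : 0 ≤ Gbar g 1 * I2 :=
    mul_nonneg hG.le (intervalIntegral.integral_nonneg zero_le_one fun _ _ => sq_nonneg _)
  have hd1 : 0 ≤ Gbar g 1 * (√(survF lam 1) - √(survF lam0 1)) ^ 2 :=
    mul_nonneg hG.le (sq_nonneg _)
  have hS0 : exp (-c2) ≤ survF lam0 1 :=
    exp_le_exp.2 (neg_le_neg (integral_zero_one_le_of_le hi0 fun u hu => (hlam0 u hu).2))
  have hS : exp (-c2) / 4 ≤ survF lam 1 := by
    refine le_trans ?_ (quarter_le_of_mul_sq_sqrt_sub_sqrt_le (s0 := survF lam0 1) hG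
      (exp_pos _).le (by linarith) (hδ.trans (by gcongr)))
    gcongr
  have hr := mul_HSq_le (fun y hy => hS.trans (survF_one_le_survF hlam hi hy)) hlam hi hlam0 hi0
  have hI1δ : I1 ≤ δ / c3 := (le_div_iff₀' hc3).2 (by linarith)
  have hI2δ : I2 ≤ δ / Gbar g 1 := (le_div_iff₀' hG).2 (by linarith)
  calc HSq lam lam0 = 4 * exp c2 * (exp (-c2) / 4 * HSq lam lam0) := by
        rw [exp_neg]; field_simp
    _ ≤ 4 * exp c2 * (2 * I2 + 2 * c2 * I1) := by gcongr
    _ ≤ 4 * exp c2 * (2 * (δ / Gbar g 1) + 2 * c2 * (δ / c3)) := by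
        have h0 := hlam0 0 (left_mem_Icc.2 zero_le_one)
        have hc2 : 0 ≤ c2 := h0.1.trans h0.2
        gcongr
    _ = _ := by ring

end Hellinger

lemma integral_abs_sub_le_of_HSq_le {lam lam0 : ℝ → ℝ} {K c2 ε : ℝ} (hK : 0 ≤ K) (hε : 0 < ε)
    (hε1 : ε ≤ 1) (hlam : ∀ u ∈ Icc (0:ℝ) 1, 0 ≤ lam u) (hlam0 : ∀ u ∈ Icc (0:ℝ) 1, 0 ≤ lam0 u)
    (hi : IntervalIntegrable lam volume 0 1) (hi0 : IntervalIntegrable lam0 volume 0 1)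
    (hA0 : ∫ u in (0:ℝ)..1, lam0 u ≤ c2) (hH : HSq lam lam0 ≤ K * ε ^ 2) :
    ∫ u in (0:ℝ)..1, |lam u - lam0 u| ≤ (5 * K / 2 + 3 * c2) * ε := by
  have hHK : HSq lam lam0 ≤ K := hH.trans (mul_le_of_le_one_right hK (pow_le_one₀ hε.le hε1))
  have hA := integral_le_two_mul_HSq_add hlam hlam0 hi hi0
  calc _ ≤ HSq lam lam0 / (2 * ε) + ε * ((∫ u in (0:ℝ)..1, lam u) + ∫ u in (0:ℝ)..1, lam0 u) :=
        integral_abs_sub_le_HSq hε hlam hlam0 hi hi0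
    _ ≤ K * ε ^ 2 / (2 * ε) + ε * (2 * K + 3 * c2) := by gcongr ?_ / _ + ε * ?_; linarith
    _ = (5 * K / 2 + 3 * c2) * ε := by field_simp; ring

lemma normalised_HSq_and_L1_le_of_HSq_le {lam0 : ℝ → ℝ} {K c1 c2 : ℝ} (hK : 0 ≤ K)
    (hc1 : 0 < c1) (hlam0 : ∀ u ∈ Icc (0:ℝ) 1, 0 ≤ lam0 u)
    (hi0 : IntervalIntegrable lam0 volume 0 1) (hA0 : c1 ≤ ∫ u in (0:ℝ)..1, lam0 u)
    (hA0' : ∫ u in (0:ℝ)..1, lam0 u ≤ c2) :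
    ∃ ε0 C : ℝ, 0 < ε0 ∧ 0 < C ∧ ∀ ε : ℝ, 0 < ε → ε ≤ ε0 →
      ∀ lam : ℝ → ℝ, (∀ u ∈ Icc (0:ℝ) 1, 0 ≤ lam u) → IntervalIntegrable lam volume 0 1 →
        HSq lam lam0 ≤ K * ε ^ 2 →
        HSq (fun u => lam u / ∫ x in (0:ℝ)..1, lam x)
            (fun u => lam0 u / ∫ x in (0:ℝ)..1, lam0 x) ≤ C * ε ^ 2 ∧
        (∫ u in (0:ℝ)..1, |lam u - lam0 u|) ^ 2 ≤ C * ε ^ 2 := by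
  set A0 := ∫ u in (0:ℝ)..1, lam0 u
  set c5 := 5 * K / 2 + 3 * c2
  have hc5 : 0 < c5 := by
    have : 0 < c2 := by linarith
    positivity
  refine ⟨min 1 (c1 / (2 * c5)), 4 * K / c1 + 4 * c5 ^ 2 / c1 ^ 2 + c5 ^ 2, by positivity,
    by positivity, fun ε hε hεle lam hlam hi hH => ?_⟩
  set A := ∫ u in (0:ℝ)..1, lam u
  have hε1 : ε ≤ 1 := hεle.trans (min_le_left _ _)
  have hc5ε : c5 * ε ≤ c1 / 2 := by
    have := hεle.trans (min_le_right _ _)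
    rw [le_div_iff₀ (by positivity)] at this
    linarith
  have hL1 : ∫ u in (0:ℝ)..1, |lam u - lam0 u| ≤ c5 * ε :=
    integral_abs_sub_le_of_HSq_le hK hε hε1 hlam hlam0 hi hi0 hA0' hH
  have hAA0 : |A - A0| ≤ c5 * ε := by
    rw [← intervalIntegral.integral_sub hi hi0]
    exact (intervalIntegral.abs_integral_le_integral_abs zero_le_one).trans hL1
  have hA1 : c1 / 2 ≤ A := by linarith [(abs_le.1 hAA0).1]
  have hAA0sq : (A - A0) ^ 2 ≤ (c5 * ε) ^ 2 := sq_le_sq' (abs_le.1 hAA0).1 (abs_le.1 hAA0).2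
  constructor
  · calc _ ≤ 2 / A * HSq lam lam0 + 2 * (A - A0) ^ 2 / (A * A0) :=
          HSq_div_integral_le (by linarith) (by linarith) hlam hlam0 hi hi0
      _ ≤ 2 / (c1 / 2) * (K * ε ^ 2) + 2 * (c5 * ε) ^ 2 / (c1 / 2 * c1) := by
          have := HSq_nonneg lam lam0
          have : 0 ≤ A := by linarith
          gcongr
      _ = (4 * K / c1 + 4 * c5 ^ 2 / c1 ^ 2) * ε ^ 2 := by field_simp; ring
      _ ≤ _ := mul_le_mul_of_nonneg_right (le_add_of_nonneg_right (sq_nonneg c5)) (sq_nonneg ε)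
  · calc _ ≤ (c5 * ε) ^ 2 := pow_le_pow_left₀
          (intervalIntegral.integral_nonneg zero_le_one fun _ _ => abs_nonneg _) hL1 2
      _ = c5 ^ 2 * ε ^ 2 := by ring
      _ ≤ _ := mul_le_mul_of_nonneg_right (le_add_of_nonneg_left (by positivity)) (sq_nonneg ε)

/-- A small Hellinger distance between the censored-data densities implies a small
pseudo-Hellinger distance between the renormalised hazards `λ/∫λ` and `λ0/∫λ0`, as well as a
small `L¹`-distance between the hazards, with constants depending only on the model
constants. -/
theorem normalised_hellinger_and_L1_bound
    (lam0 g : ℝ → ℝ) (c1 c2 c3 c4 : ℝ)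
    (hc1 : 0 < c1) (hc3 : 0 < c3)
    (hlam0cont : ContinuousOn lam0 (Set.Icc 0 1))
    (hlam0 : ∀ t ∈ Set.Icc (0:ℝ) 1, c1 ≤ lam0 t ∧ lam0 t ≤ c2)
    (hgmeas : Measurable g)
    (hg : ∀ t ∈ Set.Ico (0:ℝ) 1, c3 ≤ g t ∧ g t ≤ c4)
    (hgint : (∫ v in (0:ℝ)..1, g v) < 1) :
    ∃ ε0 C : ℝ, 0 < ε0 ∧ 0 < C ∧
      ∀ ε : ℝ, 0 < ε → ε ≤ ε0 →
      ∀ lam : ℝ → ℝ, Measurable lam →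
        (∀ u ∈ Set.Icc (0:ℝ) 1, 0 ≤ lam u) →
        IntervalIntegrable lam volume 0 1 →
        hellingerSq g lam0 lam ≤ ε ^ 2 →
        HSq (fun u => lam u / (∫ x in (0:ℝ)..1, lam x))
            (fun u => lam0 u / (∫ x in (0:ℝ)..1, lam0 x)) ≤ C * ε ^ 2 ∧
        (∫ u in (0:ℝ)..1, |lam u - lam0 u|) ^ 2 ≤ C * ε ^ 2 := by
  have hlam0' : ∀ u ∈ Icc (0:ℝ) 1, 0 ≤ lam0 u ∧ lam0 u ≤ c2 :=
    fun u hu => ⟨hc1.le.trans (hlam0 u hu).1, (hlam0 u hu).2⟩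
  have hc2 : 0 ≤ c2 := by have := hlam0' 0 (left_mem_Icc.2 zero_le_one); linarith
  have hi0 : IntervalIntegrable lam0 volume 0 1 := hlam0cont.intervalIntegrable_of_Icc zero_le_one
  have hg' : ∀ t ∈ Ioo (0:ℝ) 1, c3 ≤ g t ∧ g t ≤ c4 := fun t ht => hg t (Ioo_subset_Ico_self ht)
  have hgi : IntervalIntegrable g volume 0 1 :=
    intervalIntegrable_of_abs_le zero_le_one hgmeas.aestronglyMeasurable
      fun t ht => abs_le.2 ⟨by linarith [hg' t ht], (hg' t ht).2⟩
  have hG : 0 < Gbar g 1 := sub_pos.2 hgint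
  obtain ⟨ε1, C, hε1, hC, hbound⟩ := normalised_HSq_and_L1_le_of_HSq_le
    (K := 8 * exp c2 * (1 / Gbar g 1 + c2 / c3)) (by positivity) hc1
    (fun u hu => (hlam0' u hu).1) hi0 (le_integral_zero_one_of_le hi0 fun u hu => (hlam0 u hu).1)
    (integral_zero_one_le_of_le hi0 fun u hu => (hlam0 u hu).2)
  refine ⟨min ε1 √(Gbar g 1 * exp (-c2) / 4), C, lt_min hε1 (sqrt_pos.2 (by positivity)), hC,
    fun ε hε hεle lam _ hlam hi hH => hbound ε hε (hεle.trans (min_le_left _ _)) lam hlam hi ?_⟩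
  have hδ : ε ^ 2 ≤ Gbar g 1 * exp (-c2) / 4 :=
    (le_sqrt hε.le (by positivity)).1 (hεle.trans (min_le_right _ _))
  exact HSq_le_of_hellingerSq_le hc3 hG (fun t ht => (hg' t ht).1) hgi hlam0' hi0 hlam hi
    (by linarith) hH
end
end

section
/- There exists a constant C = C(m, C0) such that for all integers L, l ≥ 0, 0 ≤ K < 2^L and 0 ≤ k < 2^l, writing ψ_{n,lk} = ∫_0^1 ψ_{LK}(x)·ψ_{lk}(x)/M0(x) dx, the following hold: (a) if l ≤ L then |ψ_{n,lk}| ≤ C·2^{−(L−l)/2}; (b) if (l,k) ≠ (L,K) and the supports I^l_k and I^L_K intersect, then |ψ_{n,lk}| ≤ C·2^{L/2 − 3l/2}; (c) if the supports I^l_k and I^L_K are disjoint, then ψ_{n,lk} = 0. -/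
open MeasureTheory Real Set

noncomputable section

/-- The Haar mother wavelet `ψ = 1_{(0,1/2]} − 1_{(1/2,1]}`. -/
def haarMother (x : ℝ) : ℝ :=
  (Set.Ioc (0:ℝ) (1/2)).indicator (fun _ => (1:ℝ)) x
    - (Set.Ioc (1/2:ℝ) 1).indicator (fun _ => (1:ℝ)) x

/-- The Haar wavelet `ψ_{lk}(x) = 2^{l/2} ψ(2^l x − k)`. -/
def haarPsi (l k : ℕ) (x : ℝ) : ℝ :=
  (2:ℝ) ^ ((l:ℝ) / 2) * haarMother ((2:ℝ) ^ l * x - k)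

/-- The dyadic interval `I^l_k = (k 2^{−l}, (k+1) 2^{−l}]`. -/
def dyadicI (l k : ℕ) : Set ℝ := Set.Ioc ((k:ℝ) / 2 ^ l) (((k:ℝ) + 1) / 2 ^ l)

/-- `f ∈ V_L`: `f` is constant on each dyadic interval `I^{L+1}_j`, `0 ≤ j < 2^{L+1}`. -/
def MemV (L : ℕ) (f : ℝ → ℝ) : Prop :=
  ∀ j < 2 ^ (L + 1), ∀ x ∈ dyadicI (L + 1) j, ∀ y ∈ dyadicI (L + 1) j, f x = f y

/-- The `L²`-orthogonal projection onto `V_L`: on each dyadic interval `I^{L+1}_j`,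
`(P_L f)(x)` is the average `2^{L+1} ∫_{I^{L+1}_j} f`. -/
def dyadicProj (L : ℕ) (f : ℝ → ℝ) (x : ℝ) : ℝ :=
  (2:ℝ) ^ (L + 1) *
    ∫ t in (((⌈(2:ℝ) ^ (L + 1) * x⌉ - 1 : ℤ) : ℝ) / 2 ^ (L + 1))..
        (((⌈(2:ℝ) ^ (L + 1) * x⌉ : ℤ) : ℝ) / 2 ^ (L + 1)), f t

/-- The multiscale metric
`ℓ∞(f,g) = |⟨f−g, φ⟩| + Σ_{l≥0} 2^{l/2} max_{0≤k<2^l} |⟨f−g, ψ_{lk}⟩|`. -/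
def ellInfinity (f g : ℝ → ℝ) : ℝ :=
  |∫ x in (0:ℝ)..1, (f x - g x)| +
    ∑' l : ℕ, (2:ℝ) ^ ((l:ℝ) / 2) *
      ⨆ k : Fin (2 ^ l), |∫ x in (0:ℝ)..1, (f x - g x) * haarPsi l k x|

/-- The Hölder ball `H(β,D)` on `[0,1]` (for `0 < β ≤ 1`). -/
def HolderC (β D : ℝ) (f : ℝ → ℝ) : Prop :=
  ∀ x ∈ Set.Icc (0:ℝ) 1, ∀ y ∈ Set.Icc (0:ℝ) 1, |f x - f y| ≤ D * |x - y| ^ β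

/-!
`ψ_{LK}` is supported on `I^L_K`, has size `2^{L/2}` there and mean zero. Pairing it with a
function bounded by `B` on `I^L_K` gives at most `2^{-L/2} B`, which is (a) for `B = 2^{l/2}/m`.
For `l < L` the coarser wavelet `ψ_{lk}` is constant on `I^L_K` (a subinterval of one half of
`I^l_k`), while `1/M0` varies by at most `C0 2^{-L}` on `I^L_K`; the mean zero of `ψ_{LK}` lets one
subtract the value of `1/M0` at one point, gaining that factor: `C0 2^{l/2 - 3L/2}`. The case
`l > L` is symmetric and overlapping intervals of equal level coincide, which gives (b). Disjoint
supports give (c).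
-/

open scoped NNReal

lemma mem_dyadicI_iff {l k : ℕ} {x : ℝ} :
    x ∈ dyadicI l k ↔ (k : ℝ) < 2 ^ l * x ∧ 2 ^ l * x ≤ k + 1 := by
  have h2 : (0 : ℝ) < 2 ^ l := by positivity
  rw [dyadicI, mem_Ioc, div_lt_iff₀' h2, le_div_iff₀' h2]

lemma mem_dyadicI_iff_ceil {l k : ℕ} {x : ℝ} :
    x ∈ dyadicI l k ↔ ⌈(2 : ℝ) ^ l * x⌉ = k + 1 := by
  rw [mem_dyadicI_iff, Int.ceil_eq_iff]
  push_cast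
  rw [add_sub_cancel_right]

lemma right_mem_dyadicI (l k : ℕ) : ((k : ℝ) + 1) / 2 ^ l ∈ dyadicI l k :=
  right_mem_Ioc.2 (by gcongr; linarith)

lemma dyadicI_subset_Ioc {l k : ℕ} (hk : k < 2 ^ l) : dyadicI l k ⊆ Ioc 0 1 := by
  intro x hx
  rw [mem_dyadicI_iff] at hx
  have hk' : (k : ℝ) + 1 ≤ 2 ^ l := by exact_mod_cast hk
  have h2 : (0 : ℝ) < 2 ^ l := by positivity
  exact ⟨pos_of_mul_pos_right (k.cast_nonneg.trans_lt hx.1) h2.le,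
    le_of_mul_le_mul_left (by linarith [hx.2]) h2⟩

lemma dyadicI_disjoint {l k K : ℕ} (h : k ≠ K) : Disjoint (dyadicI l k) (dyadicI l K) := by
  refine disjoint_left.2 fun x hk hK => h ?_
  rw [mem_dyadicI_iff_ceil] at hk hK
  exact_mod_cast add_right_cancel (hk.symm.trans hK)

lemma dyadicI_subset_dyadicI {l L : ℕ} (h : l ≤ L) (K : ℕ) :
    dyadicI L K ⊆ dyadicI l (K / 2 ^ (L - l)) := by
  obtain ⟨s, rfl⟩ := Nat.exists_eq_add_of_le h
  rw [Nat.add_sub_cancel_left]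
  have hlow : ((K / 2 ^ s * 2 ^ s : ℕ) : ℝ) ≤ K := by
    exact_mod_cast Nat.div_mul_le_self K (2 ^ s)
  have hup : (K : ℝ) + 1 ≤ ((2 ^ s * (K / 2 ^ s + 1) : ℕ) : ℝ) := by
    exact_mod_cast Nat.lt_mul_div_succ K (by positivity)
  push_cast at hlow hup
  intro x hx
  rw [mem_dyadicI_iff, pow_add, mul_comm ((2 : ℝ) ^ l), mul_assoc] at hx
  have hs : (0 : ℝ) < 2 ^ s := by positivity
  rw [mem_dyadicI_iff]
  constructor
  · exact lt_of_mul_lt_mul_right (by linarith [hx.1]) hs.le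
  · exact le_of_mul_le_mul_left (by linarith [hx.2]) hs

lemma support_haarMother_subset : Function.support haarMother ⊆ Ioc 0 1 := by
  intro t ht
  by_contra h
  refine ht ?_
  rw [haarMother, indicator_of_notMem fun h' => h (Ioc_subset_Ioc_right (by norm_num) h'),
    indicator_of_notMem fun h' => h (Ioc_subset_Ioc_left (by norm_num) h'), sub_zero]

lemma abs_haarMother_le (t : ℝ) : |haarMother t| ≤ 1 := by
  simp only [haarMother, indicator_apply]
  split_ifs <;> norm_num

lemma measurable_haarMother : Measurable haarMother :=
  (measurable_const.indicator measurableSet_Ioc).sub (measurable_const.indicator measurableSet_Ioc)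

lemma integral_haarMother : ∫ t, haarMother t = 0 := by
  have hint (a b : ℝ) : Integrable ((Ioc a b).indicator fun _ => (1 : ℝ)) :=
    (integrable_indicator_iff measurableSet_Ioc).2 (integrableOn_const measure_Ioc_lt_top.ne)
  simp only [haarMother]
  rw [integral_sub (hint _ _) (hint _ _), integral_indicator_const _ measurableSet_Ioc,
    integral_indicator_const _ measurableSet_Ioc, volume_real_Ioc_of_le (by norm_num),
    volume_real_Ioc_of_le (by norm_num)]
  norm_num

lemma haarMother_eq_of_ceil_eq {s t : ℝ} (h : ⌈2 * s⌉ = ⌈2 * t⌉) :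
    haarMother s = haarMother t := by
  have cells (u : ℝ) : (u ∈ Ioc (0 : ℝ) (1 / 2) ↔ ⌈2 * u⌉ = 1) ∧
      (u ∈ Ioc (1 / 2 : ℝ) 1 ↔ ⌈2 * u⌉ = 2) := by
    simp only [Int.ceil_eq_iff, mem_Ioc, Int.cast_one, Int.cast_ofNat]
    constructor <;> constructor <;> rintro ⟨_, _⟩ <;> constructor <;> linarith
  simp only [haarMother, indicator_apply, (cells s).1, (cells s).2, (cells t).1, (cells t).2, h]

lemma haarPsi_eq_zero_of_notMem {l k : ℕ} {x : ℝ} (hx : x ∉ dyadicI l k) :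
    haarPsi l k x = 0 := by
  have : (2 : ℝ) ^ l * x - k ∉ Function.support haarMother := fun h => by
    obtain ⟨h0, h1⟩ := support_haarMother_subset h
    exact hx (mem_dyadicI_iff.2 ⟨by linarith, by linarith⟩)
  rw [haarPsi, Function.notMem_support.1 this, mul_zero]

lemma abs_haarPsi_le (l k : ℕ) (x : ℝ) : |haarPsi l k x| ≤ 2 ^ ((l : ℝ) / 2) := by
  rw [haarPsi, abs_mul, abs_of_pos (by positivity)]
  exact mul_le_of_le_one_right (by positivity) (abs_haarMother_le _)

lemma haarPsi_mul_haarPsi_eq_zero {l k L K : ℕ} (h : Disjoint (dyadicI l k) (dyadicI L K))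
    (x : ℝ) :
    haarPsi L K x * haarPsi l k x = 0 := by
  by_cases hx : x ∈ dyadicI L K
  · rw [haarPsi_eq_zero_of_notMem (disjoint_right.1 h hx), mul_zero]
  · rw [haarPsi_eq_zero_of_notMem hx, zero_mul]

lemma haarPsi_eq_of_mem_dyadicI_succ {l k j : ℕ} {x y : ℝ} (hx : x ∈ dyadicI (l + 1) j)
    (hy : y ∈ dyadicI (l + 1) j) : haarPsi l k x = haarPsi l k y := by
  have ceil_eq (z : ℝ) :
      ⌈2 * ((2 : ℝ) ^ l * z - k)⌉ = ⌈(2 : ℝ) ^ (l + 1) * z⌉ - 2 * k := by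
    rw [show 2 * ((2 : ℝ) ^ l * z - k) = 2 ^ (l + 1) * z - ((2 * k : ℕ) : ℝ) by
      push_cast; ring, Int.ceil_sub_natCast]
    push_cast; rfl
  rw [mem_dyadicI_iff_ceil] at hx hy
  rw [haarPsi, haarPsi]
  congr 1
  exact haarMother_eq_of_ceil_eq (by rw [ceil_eq, ceil_eq, hx, hy])

lemma haarPsi_eq_of_mem_dyadicI {l k L K : ℕ} (h : l < L) {x y : ℝ} (hx : x ∈ dyadicI L K)
    (hy : y ∈ dyadicI L K) : haarPsi l k x = haarPsi l k y :=
  haarPsi_eq_of_mem_dyadicI_succ (dyadicI_subset_dyadicI h K hx) (dyadicI_subset_dyadicI h K hy)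

lemma measurable_haarPsi (l k : ℕ) : Measurable (haarPsi l k) :=
  measurable_const.mul (measurable_haarMother.comp (by fun_prop))

lemma intervalIntegrable_haarPsi (l k : ℕ) (a b : ℝ) :
    IntervalIntegrable (haarPsi l k) volume a b :=
  (intervalIntegrable_const (c := (2 : ℝ) ^ ((l : ℝ) / 2))).mono_fun'
    (measurable_haarPsi l k).aestronglyMeasurable
    (Filter.Eventually.of_forall fun x => abs_haarPsi_le l k x)

lemma integral_haarPsi {L K : ℕ} (hK : K < 2 ^ L) : ∫ x in (0 : ℝ)..1, haarPsi L K x = 0 := by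
  have hK' : (K : ℝ) + 1 ≤ 2 ^ L := by exact_mod_cast hK
  have hsupp : Function.support haarMother ⊆ Ioc (2 ^ L * 0 - K) (2 ^ L * 1 - K) :=
    support_haarMother_subset.trans (Ioc_subset_Ioc (by simp) (by linarith))
  simp only [haarPsi]
  rw [intervalIntegral.integral_const_mul, intervalIntegral.integral_comp_mul_sub _ (by positivity),
    intervalIntegral.integral_eq_integral_of_support_subset hsupp, integral_haarMother, smul_zero,
    mul_zero]

lemma volume_real_dyadicI (l k : ℕ) : volume.real (dyadicI l k) = ((2 : ℝ) ^ l)⁻¹ := by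
  rw [dyadicI, volume_real_Ioc_of_le (by gcongr; linarith)]
  field_simp
  ring

lemma abs_integral_haarPsi_mul_le {L K : ℕ} (hK : K < 2 ^ L) {g : ℝ → ℝ} {B : ℝ}
    (hg : ∀ x ∈ dyadicI L K, |g x| ≤ B) :
    |∫ x in (0 : ℝ)..1, haarPsi L K x * g x| ≤ 2 ^ (-(L : ℝ) / 2) * B := by
  have hvanish : ∀ x ∈ Ioc 0 1 \ dyadicI L K, haarPsi L K x * g x = 0 := fun x hx => by
    rw [haarPsi_eq_zero_of_notMem hx.2, zero_mul]
  rw [intervalIntegral.integral_of_le zero_le_one,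
    setIntegral_eq_of_subset_of_forall_sdiff_eq_zero measurableSet_Ioc (dyadicI_subset_Ioc hK)
      hvanish,
    ← Real.norm_eq_abs]
  calc ‖∫ x in dyadicI L K, haarPsi L K x * g x‖
      ≤ 2 ^ ((L : ℝ) / 2) * B * volume.real (dyadicI L K) :=
        norm_setIntegral_le_of_norm_le_const measure_Ioc_lt_top fun x hx => by
          rw [Real.norm_eq_abs, abs_mul]
          exact mul_le_mul (abs_haarPsi_le L K x) (hg x hx) (abs_nonneg _) (by positivity)
    _ = 2 ^ (-(L : ℝ) / 2) * B := by
        rw [volume_real_dyadicI, ← Real.rpow_natCast, ← Real.rpow_neg zero_le_two,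
          mul_right_comm, ← Real.rpow_add two_pos]
        ring_nf

lemma abs_integral_haarPsi_mul_le_of_lipschitzOnWith {L K : ℕ} (hK : K < 2 ^ L) {C : ℝ≥0}
    {g : ℝ → ℝ} (hg : LipschitzOnWith C g (dyadicI L K)) :
    |∫ x in (0 : ℝ)..1, haarPsi L K x * g x| ≤ C * 2 ^ (-(3 * L : ℝ) / 2) := by
  set b : ℝ := ((K : ℝ) + 1) / 2 ^ L
  have hb : b ∈ dyadicI L K := right_mem_dyadicI L K
  by_cases hint : IntervalIntegrable (fun x => haarPsi L K x * g x) volume 0 1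
  swap
  · rw [intervalIntegral.integral_undef hint, abs_zero]
    positivity
  have hcancel : ∫ x in (0 : ℝ)..1, haarPsi L K x * g x
      = ∫ x in (0 : ℝ)..1, haarPsi L K x * (g x - g b) := by
    simp_rw [mul_sub]
    rw [intervalIntegral.integral_sub hint ((intervalIntegrable_haarPsi L K 0 1).mul_const _),
      intervalIntegral.integral_mul_const, integral_haarPsi hK, zero_mul, sub_zero]
  have hosc : ∀ x ∈ dyadicI L K, |g x - g b| ≤ C * ((2 : ℝ) ^ L)⁻¹ := fun x hx => by
    rw [← Real.dist_eq, ← volume_real_dyadicI L K, dyadicI, volume_real_Ioc_of_le hb.1.le]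
    exact (hg.dist_le_mul x hx b hb).trans (by
      gcongr
      exact Real.dist_le_of_mem_Icc (Ioc_subset_Icc_self hx) (Ioc_subset_Icc_self hb))
  calc |∫ x in (0 : ℝ)..1, haarPsi L K x * g x|
      ≤ 2 ^ (-(L : ℝ) / 2) * (C * ((2 : ℝ) ^ L)⁻¹) :=
        hcancel ▸ abs_integral_haarPsi_mul_le hK hosc
    _ = C * 2 ^ (-(3 * L : ℝ) / 2) := by
        rw [← Real.rpow_natCast, ← Real.rpow_neg zero_le_two, mul_left_comm,
          ← Real.rpow_add two_pos]
        ring_nf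

lemma abs_integral_haarPsi_mul_haarPsi_div_le {l k L K : ℕ} (hK : K < 2 ^ L) {m : ℝ}
    (hm : 0 < m) {M0 : ℝ → ℝ} (hM0 : ∀ x ∈ dyadicI L K, m ≤ M0 x) :
    |∫ x in (0 : ℝ)..1, haarPsi L K x * haarPsi l k x / M0 x|
      ≤ 1 / m * 2 ^ (-(((L : ℝ) - l) / 2)) := by
  have hbound : ∀ x ∈ dyadicI L K, |haarPsi l k x / M0 x| ≤ 2 ^ ((l : ℝ) / 2) / m := by
    intro x hx
    rw [abs_div, abs_of_pos (hm.trans_le (hM0 x hx))]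
    exact div_le_div₀ (by positivity) (abs_haarPsi_le l k x) hm (hM0 x hx)
  simp_rw [mul_div_assoc]
  calc |∫ x in (0 : ℝ)..1, haarPsi L K x * (haarPsi l k x / M0 x)|
      ≤ 2 ^ (-(L : ℝ) / 2) * (2 ^ ((l : ℝ) / 2) / m) := abs_integral_haarPsi_mul_le hK hbound
    _ = 1 / m * 2 ^ (-(((L : ℝ) - l) / 2)) := by
        rw [mul_div_assoc', ← Real.rpow_add two_pos]
        ring_nf

lemma abs_integral_haarPsi_mul_haarPsi_mul_le_of_lt {l k L K : ℕ} (hlL : l < L) (hK : K < 2 ^ L)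
    {C : ℝ≥0} {g : ℝ → ℝ} (hg : LipschitzOnWith C g (dyadicI L K)) :
    |∫ x in (0 : ℝ)..1, haarPsi L K x * haarPsi l k x * g x|
      ≤ C * 2 ^ ((l : ℝ) / 2 - 3 * L / 2) := by
  set c := haarPsi l k (((K : ℝ) + 1) / 2 ^ L)
  have hconst (x : ℝ) : haarPsi L K x * haarPsi l k x * g x = haarPsi L K x * (c • g) x := by
    by_cases hx : x ∈ dyadicI L K
    · rw [haarPsi_eq_of_mem_dyadicI hlL hx (right_mem_dyadicI L K), Pi.smul_apply, smul_eq_mul,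
        mul_assoc]
    · rw [haarPsi_eq_zero_of_notMem hx, zero_mul, zero_mul, zero_mul]
  simp_rw [hconst]
  calc |∫ x in (0 : ℝ)..1, haarPsi L K x * (c • g) x|
      ≤ ↑(‖c‖₊ * C) * 2 ^ (-(3 * L : ℝ) / 2) :=
        abs_integral_haarPsi_mul_le_of_lipschitzOnWith hK
          ((lipschitzWith_smul c).comp_lipschitzOnWith hg)
    _ ≤ 2 ^ ((l : ℝ) / 2) * C * 2 ^ (-(3 * L : ℝ) / 2) := by
        push_cast
        gcongr
        exact abs_haarPsi_le l k _
    _ = C * 2 ^ ((l : ℝ) / 2 - 3 * L / 2) := by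
        rw [mul_comm _ (C : ℝ), mul_assoc, ← Real.rpow_add two_pos]
        ring_nf

lemma abs_integral_haarPsi_mul_haarPsi_mul_le {l k L K : ℕ} (hK : K < 2 ^ L) (hk : k < 2 ^ l)
    (hne : (l, k) ≠ (L, K)) (hinter : (dyadicI l k ∩ dyadicI L K).Nonempty) {C : ℝ≥0}
    {g : ℝ → ℝ} (hg : LipschitzOnWith C g (Ioc 0 1)) :
    |∫ x in (0 : ℝ)..1, haarPsi L K x * haarPsi l k x * g x|
      ≤ C * 2 ^ ((L : ℝ) / 2 - 3 * l / 2) := by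
  rcases lt_trichotomy l L with hlt | rfl | hgt
  · calc |∫ x in (0 : ℝ)..1, haarPsi L K x * haarPsi l k x * g x|
        ≤ C * 2 ^ ((l : ℝ) / 2 - 3 * L / 2) :=
          abs_integral_haarPsi_mul_haarPsi_mul_le_of_lt hlt hK (hg.mono (dyadicI_subset_Ioc hK))
      _ ≤ C * 2 ^ ((L : ℝ) / 2 - 3 * l / 2) := by
          have : (l : ℝ) < L := by exact_mod_cast hlt
          gcongr
          linarith
  · exact absurd ((dyadicI_disjoint fun h => hne (by rw [h])).inter_eq) hinter.ne_empty
  · simp_rw [mul_comm (haarPsi L K _) (haarPsi l k _)]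
    exact abs_integral_haarPsi_mul_haarPsi_mul_le_of_lt hgt hk (hg.mono (dyadicI_subset_Ioc hk))

theorem haar_coeff_decay_of_psiLK_div_M0_general
    (m C0 : ℝ) (hm : 0 < m) :
    ∃ C : ℝ, 0 < C ∧
      ∀ M0 : ℝ → ℝ, Measurable M0 →
        (∀ u ∈ Set.Icc (0:ℝ) 1, m ≤ M0 u ∧ M0 u ≤ 1) →
        LipschitzOnWith (Real.toNNReal C0) (fun u => 1 / M0 u) (Set.Icc 0 1) →
        ∀ L l K k : ℕ, K < 2 ^ L → k < 2 ^ l →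
          (l ≤ L →
            |∫ x in (0:ℝ)..1, haarPsi L K x * haarPsi l k x / M0 x|
              ≤ C * (2:ℝ) ^ (-(((L:ℝ) - (l:ℝ)) / 2))) ∧
          ((l, k) ≠ (L, K) → (dyadicI l k ∩ dyadicI L K).Nonempty →
            |∫ x in (0:ℝ)..1, haarPsi L K x * haarPsi l k x / M0 x|
              ≤ C * (2:ℝ) ^ ((L:ℝ)/2 - 3*(l:ℝ)/2)) ∧
          (dyadicI l k ∩ dyadicI L K = ∅ →
            (∫ x in (0:ℝ)..1, haarPsi L K x * haarPsi l k x / M0 x) = 0) := by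
  refine ⟨1 / m + Real.toNNReal C0, by positivity,
    fun M0 _ hM0 hlip L l K k hK hk => ⟨fun _ => ?_, fun hne hinter => ?_, fun hdisj => ?_⟩⟩
  · calc |∫ x in (0 : ℝ)..1, haarPsi L K x * haarPsi l k x / M0 x|
        ≤ 1 / m * 2 ^ (-(((L : ℝ) - l) / 2)) :=
          abs_integral_haarPsi_mul_haarPsi_div_le hK hm fun x hx =>
            (hM0 x (Ioc_subset_Icc_self (dyadicI_subset_Ioc hK hx))).1
      _ ≤ _ := by gcongr; exact le_add_of_nonneg_right (NNReal.coe_nonneg _)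
  · calc |∫ x in (0 : ℝ)..1, haarPsi L K x * haarPsi l k x / M0 x|
        = |∫ x in (0 : ℝ)..1, haarPsi L K x * haarPsi l k x * (1 / M0 x)| := by
          simp_rw [mul_one_div]
      _ ≤ Real.toNNReal C0 * 2 ^ ((L : ℝ) / 2 - 3 * l / 2) :=
          abs_integral_haarPsi_mul_haarPsi_mul_le hK hk hne hinter (hlip.mono Ioc_subset_Icc_self)
      _ ≤ _ := by gcongr; exact le_add_of_nonneg_left (by positivity)
  · simp [haarPsi_mul_haarPsi_eq_zero (disjoint_iff_inter_eq_empty.2 hdisj)]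

/-- Wavelet coefficients of `ψ_{LK}/M0`: decay bounds on
`ψ_{n,lk} = ∫_0^1 ψ_{LK} ψ_{lk} / M0`, with a constant depending only on the lower bound `m`
of `M0` and the Lipschitz constant `C0` of `1/M0`. -/
theorem haar_coeff_decay_of_psiLK_div_M0
    (m C0 : ℝ) (hm : 0 < m) (hC0 : 0 < C0) :
    ∃ C : ℝ, 0 < C ∧
      ∀ M0 : ℝ → ℝ, Measurable M0 →
        (∀ u ∈ Set.Icc (0:ℝ) 1, m ≤ M0 u ∧ M0 u ≤ 1) →
        LipschitzOnWith (Real.toNNReal C0) (fun u => 1 / M0 u) (Set.Icc 0 1) →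
        ∀ L l K k : ℕ, K < 2 ^ L → k < 2 ^ l →
          (l ≤ L →
            |∫ x in (0:ℝ)..1, haarPsi L K x * haarPsi l k x / M0 x|
              ≤ C * (2:ℝ) ^ (-(((L:ℝ) - (l:ℝ)) / 2))) ∧
          ((l, k) ≠ (L, K) → (dyadicI l k ∩ dyadicI L K).Nonempty →
            |∫ x in (0:ℝ)..1, haarPsi L K x * haarPsi l k x / M0 x|
              ≤ C * (2:ℝ) ^ ((L:ℝ)/2 - 3*(l:ℝ)/2)) ∧
          (dyadicI l k ∩ dyadicI L K = ∅ →
            (∫ x in (0:ℝ)..1, haarPsi L K x * haarPsi l k x / M0 x) = 0) :=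
  haar_coeff_decay_of_psiLK_div_M0_general m C0 hm
end
end
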